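/- Any affine map $u_0(x) = Ax + b$ on $\mathbb{R}^n$ with $A$ skew-symmetric ($A = -A^T$) that vanishes on a subset $\Gamma$ of positive $(n-1)$-dimensional Hausdorff measure of the boundary of a bounded Lipschitz domain must vanish identically, i.e., $A = 0$ and $b = 0$. -/
import Mathlib

open Matrix MeasureTheory Set Module ENNReal NNReal

-- skew quadratic form vanishes
lemma skew_quad {n : ℕ} {A : Matrix (Fin n) (Fin n) ℝ} (hA : Aᵀ = -A)
    (x : Fin n → ℝ) : x ⬝ᵥ A.mulVec x = 0 := by
  have h1 : x ⬝ᵥ A.mulVec x = Aᵀ.mulVec x ⬝ᵥ x := by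
    rw [Matrix.dotProduct_mulVec, Matrix.mulVec_transpose]
  rw [hA] at h1
  simp only [Matrix.neg_mulVec, neg_dotProduct] at h1
  have h2 : A.mulVec x ⬝ᵥ x = x ⬝ᵥ A.mulVec x := dotProduct_comm _ _
  linarith [h1, h2.symm]

-- skew nonzero matrix has kernel of dim ≤ n - 2
lemma skew_ker_le {n : ℕ} {A : Matrix (Fin n) (Fin n) ℝ} (hA : Aᵀ = -A) (hA0 : A ≠ 0) :
    finrank ℝ (LinearMap.ker A.mulVecLin) + 2 ≤ n := by
  set f := A.mulVecLin
  have hrn : finrank ℝ (LinearMap.range f) + finrank ℝ (LinearMap.ker f) = n := by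
    simpa [Module.finrank_fin_fun] using LinearMap.finrank_range_add_finrank_ker f
  have h1 : 1 ≤ finrank ℝ (LinearMap.range f) := by
    rw [Nat.one_le_iff_ne_zero]
    intro h
    have : LinearMap.range f = ⊥ := Submodule.finrank_eq_zero.mp h
    apply hA0
    have hf : f = 0 := LinearMap.range_eq_bot.mp this
    ext i j
    have := congrFun (LinearMap.congr_fun hf (Pi.single j 1)) i
    simpa [f, Matrix.mulVec_single] using this
  have h2 : finrank ℝ (LinearMap.range f) ≠ 1 := by
    intro h
    obtain ⟨v, hv0, hv⟩ := finrank_eq_one_iff'.mp h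
    -- v : range f, nonzero, spans
    set w : Fin n → ℝ := (v : Fin n → ℝ)
    have hw0 : w ≠ 0 := by simpa [w] using Subtype.coe_injective.ne hv0
    -- A w = c • w
    have hAw : (⟨A.mulVec w, ⟨w, rfl⟩⟩ : LinearMap.range f) ∈ (⊤ : Submodule ℝ _) := trivial
    obtain ⟨c, hc⟩ := hv (⟨A.mulVec w, ⟨w, rfl⟩⟩ : LinearMap.range f)
    have hc' : c • w = A.mulVec w := congrArg Subtype.val hc
    have hq := skew_quad hA w
    rw [← hc'] at hq
    have hww : w ⬝ᵥ w ≠ 0 := by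
      intro h0
      exact hw0 (by simpa using (dotProduct_self_eq_zero).mp h0)
    have hc0 : c = 0 := by
      have : c * (w ⬝ᵥ w) = 0 := by simpa [dotProduct_smul, smul_eq_mul] using hq
      exact (mul_eq_zero.mp this).resolve_right hww
    have hAw0 : A.mulVec w = 0 := by rw [← hc', hc0, zero_smul]
    -- w ∈ range f : w = A u
    obtain ⟨u, hu⟩ := v.2
    have hwu : w = A.mulVec u := hu.symm
    have key : A.mulVec u ⬝ᵥ w = u ⬝ᵥ (Aᵀ.mulVec w) := by
      rw [dotProduct_comm, Matrix.dotProduct_mulVec, Matrix.mulVec_transpose,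
        dotProduct_comm]
    rw [hA, Matrix.neg_mulVec, hAw0, neg_zero, dotProduct_zero] at key
    exact hww (by rw [hwu] at key ⊢; exact key)
  omega

theorem skew_affine_vanishing_on_boundary_subset (n : ℕ)
    (Ω : Set (Fin n → ℝ)) (hΩopen : IsOpen Ω) (hΩne : Ω.Nonempty)
    (hΩbdd : Bornology.IsBounded Ω)
    (Γ : Set (Fin n → ℝ)) (hΓ : Γ ⊆ frontier Ω)
    (hΓpos : 0 < μH[(n : ℝ) - 1] Γ)
    (A : Matrix (Fin n) (Fin n) ℝ) (hA : Aᵀ = -A) (b : Fin n → ℝ)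
    (hvanish : ∀ x ∈ Γ, A.mulVec x + b = 0) :
    A = 0 ∧ b = 0 := by
  have hΓne : Γ.Nonempty := nonempty_of_measure_ne_zero hΓpos.ne'
  obtain ⟨x₀, hx₀⟩ := hΓne
  by_cases hA0 : A = 0
  · refine ⟨hA0, ?_⟩
    have := hvanish x₀ hx₀
    rw [hA0] at this
    simpa using this
  · exfalso
    have hk := skew_ker_le hA hA0
    set S := LinearMap.ker A.mulVecLin with hS
    have hn2 : 2 ≤ n := by omega
    have hx₀Z : A.mulVec x₀ = -b := by
      have := hvanish x₀ hx₀
      linear_combination (norm := module) this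
    have hsub : Γ ⊆ (fun y => x₀ + y) '' (S : Set (Fin n → ℝ)) := by
      intro x hx
      refine ⟨x - x₀, ?_, by show x₀ + (x - x₀) = x; abel⟩
      simp only [SetLike.mem_coe, hS, LinearMap.mem_ker]
      show A.mulVecLin (x - x₀) = 0
      rw [map_sub]
      simp only [Matrix.mulVecLin_apply]
      have hx' : A.mulVec x = -b := by
        have := hvanish x hx
        linear_combination (norm := module) this
      rw [hx', hx₀Z]
      abel
    have hiso : Isometry (fun y : Fin n → ℝ => x₀ + y) :=
      Isometry.of_dist_eq fun a c => by simp [dist_add_left]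
    have hdim2 : dimH Γ ≤ (finrank ℝ S : ℝ≥0∞) := by
      calc dimH Γ ≤ dimH ((fun y => x₀ + y) '' (S : Set (Fin n → ℝ))) := dimH_mono hsub
        _ = dimH (S : Set (Fin n → ℝ)) := hiso.dimH_image _
        _ = dimH (Subtype.val '' (Set.univ : Set S)) := by
              rw [Set.image_univ, Subtype.range_coe]
        _ = dimH (Set.univ : Set S) := (isometry_subtype_coe).dimH_image _
        _ = (finrank ℝ S : ℝ≥0∞) := Real.dimH_univ_eq_finrank S
    have hdim1 : (((n - 1 : ℕ) : ℝ≥0) : ℝ≥0∞) ≤ dimH Γ := by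
      apply le_dimH_of_hausdorffMeasure_ne_zero
      have hc : (((n - 1 : ℕ) : ℝ≥0) : ℝ) = (n : ℝ) - 1 := by
        rw [NNReal.coe_natCast, Nat.cast_sub (by omega : 1 ≤ n), Nat.cast_one]
      rw [hc]
      exact hΓpos.ne'
    have : ((n - 1 : ℕ) : ℝ≥0∞) ≤ (finrank ℝ S : ℝ≥0∞) := by
      refine le_trans ?_ hdim2
      simpa using hdim1
    have hle : n - 1 ≤ finrank ℝ S := by exact_mod_cast this
    omega
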